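/- arXiv:1305.4911 — 4 statements merged into one kernel-verified Lean document; each statement's English description precedes it below -/
import Mathlib

section
/- For all integers u, v ≥ 1, the integer (2^(u+v))! / (((2^u)!)^(2^v) · (2^v)!) is odd. -/
/-!
The quotient is the uniform Bell number counting partitions of a `2^(u+v)`-set into `2^v` blocks
of size `2^u`. For any prime `p`, Legendre's formula gives `v_p((p^k)!) = (p^k - 1)/(p - 1)`, so the
`p`-adic valuations of `(p^(m+n))!` and of `((p^n)!)^(p^m) (p^m)!` agree, since
`p^m (p^n - 1) + (p^m - 1) = p^(m+n) - 1`.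
-/

open Nat

theorem sub_one_mul_padicValNat_factorial_pow_add_one (p : ℕ) [Fact p.Prime] (k : ℕ) :
    (p - 1) * padicValNat p (p ^ k)! + 1 = p ^ k := by
  induction k with
  | zero => simp
  | succ k ih =>
    have hp : 1 ≤ p := (Fact.out : p.Prime).one_le
    rw [pow_succ', padicValNat_factorial_mul, mul_add, add_right_comm, ih]
    zify [hp]
    ring

theorem not_dvd_uniformBell_pow_pow (p : ℕ) [hp : Fact p.Prime] (m n : ℕ) :
    ¬ p ∣ uniformBell (p ^ m) (p ^ n) := by
  have hprod := uniformBell_mul_eq (p ^ m) (pow_ne_zero n hp.out.ne_zero)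
  have hB : uniformBell (p ^ m) (p ^ n) ≠ 0 := by
    intro h
    simp [h, eq_comm, factorial_ne_zero] at hprod
  have hval := congrArg (padicValNat p) hprod
  rw [padicValNat.mul (by positivity) (factorial_ne_zero _),
    padicValNat.mul hB (by positivity), padicValNat.pow] at hval
  have hm := sub_one_mul_padicValNat_factorial_pow_add_one p m
  have hn := sub_one_mul_padicValNat_factorial_pow_add_one p n
  have hmn := sub_one_mul_padicValNat_factorial_pow_add_one p (m + n)
  rw [pow_add, ← hval] at hmn
  have hzero : (p - 1) * padicValNat p (uniformBell (p ^ m) (p ^ n)) = 0 := by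
    linear_combination hmn - p ^ m * hn - hm
  have hp1 : p - 1 ≠ 0 := by have := hp.out.two_le; omega
  simpa [padicValNat.eq_zero_iff, hp.out.ne_one, hB, hp1] using hzero

theorem stmt_4_general (u v : ℕ) :
    Odd (Nat.factorial (2 ^ (u + v)) /
      ((Nat.factorial (2 ^ u)) ^ (2 ^ v) * Nat.factorial (2 ^ v))) := by
  rw [add_comm, pow_add, ← uniformBell_eq_div _ (by positivity), Nat.odd_iff,
    ← Nat.two_dvd_ne_zero]
  exact not_dvd_uniformBell_pow_pow 2 v u

/-- For all integers `u, v ≥ 1`, the integer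
`(2^(u+v))! / (((2^u)!)^(2^v) * (2^v)!)` is odd. -/
theorem stmt_4 (u v : ℕ) (hu : 1 ≤ u) (hv : 1 ≤ v) :
    Odd (Nat.factorial (2 ^ (u + v)) /
      ((Nat.factorial (2 ^ u)) ^ (2 ^ v) * Nat.factorial (2 ^ v))) :=
  stmt_4_general u v
end

section
/- Let m = a·b ≥ 8 with a, b ≥ 2, and let p be the smallest prime divisor of m. Then m! / (((m/p)!)^p · p!) ≤ m! / ((a!)^b · b!); that is, among all factorizations m = ab with a, b ≥ 2, the quantity w(a, b) = m!/((a!)^b · b!) is smallest when b is the smallest prime divisor of m. -/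
/-!
Write `n! = ∏_{i ≥ 1} ((i + 1) / i) ^ (n - i)`. Then `a! ^ b * b!` is the product of the ratios
`(i + 1) / i > 1` with exponents `b (a - i) + (b - i)`, the number of its factors exceeding `i`.
If `c d = a b` with `0 < d ≤ a, b`, these exponents are termwise at most those of `c! ^ d * d!`,
hence `a! ^ b * b! ≤ c! ^ d * d!`; apply this with `d` the smallest prime factor of `m`.
-/

open Finset Nat

/-- The number of factors exceeding `x` when `a! ^ b * b!` is written as a product of
`a * b + b` integers, `b` copies of `1, …, a` and one copy of `1, …, b`. -/
def tailCount (a b x : ℕ) : ℕ := b * (a - x) + (b - x)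

theorem tailCount_le {a b c d x : ℕ} (hd : 0 < d) (hda : d ≤ a) (hdb : d ≤ b)
    (h : c * d = a * b) (hx : 1 ≤ x) : tailCount a b x ≤ tailCount c d x := by
  have hbc : b ≤ c := Nat.le_of_mul_le_mul_right (by rw [h, mul_comm a]; gcongr) hd
  have hdx : d * x ≤ b * x := Nat.mul_le_mul_right x hdb
  have gap : b - d ≤ b * x - d * x := by
    rw [← Nat.sub_mul]
    exact Nat.le_mul_of_pos_right _ hx
  have tail_c : b - x ≤ a * b - d * x := by
    rw [← h, mul_comm c d, ← Nat.mul_sub]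
    exact (Nat.sub_le_sub_right hbc x).trans (Nat.le_mul_of_pos_left _ hd)
  unfold tailCount
  -- with `m = a b = c d`, the two sides are `(m - b x) + (b - x)` and `(m - d x) + (d - x)`
  rw [Nat.mul_sub, Nat.mul_sub, mul_comm b a, mul_comm d c, h]
  omega

theorem prod_range_succ_div_self (n : ℕ) : ∏ i ∈ range n, ((i + 2 : ℚ) / (i + 1)) = n + 1 := by
  induction n with
  | zero => simp
  | succ n ih =>
    rw [prod_range_succ, ih]
    push_cast
    field_simp
    ring

theorem factorial_eq_prod_pow {n X : ℕ} (h : n ≤ X) :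
    (n ! : ℚ) = ∏ i ∈ range X, ((i + 2 : ℚ) / (i + 1)) ^ (n - (i + 1)) := by
  rw [← prod_range_mul_prod_Ico _ h, prod_eq_one (s := Ico n X) fun i hi => by
    rw [Nat.sub_eq_zero_of_le (by have := (mem_Ico.mp hi).1; omega), pow_zero], mul_one]
  clear h
  induction n with
  | zero => simp
  | succ n ih =>
    have exponents : ∀ i ∈ range n, ((i + 2 : ℚ) / (i + 1)) ^ (n + 1 - (i + 1)) =
        ((i + 2 : ℚ) / (i + 1)) ^ (n - (i + 1)) * ((i + 2 : ℚ) / (i + 1)) := by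
      intro i hi
      rw [← pow_succ]
      have := mem_range.mp hi
      congr 1
      omega
    rw [prod_range_succ, Nat.sub_self, pow_zero, mul_one, prod_congr rfl exponents,
      prod_mul_distrib, ← ih, prod_range_succ_div_self, factorial_succ]
    push_cast
    ring

theorem factorial_pow_mul_factorial_eq_prod {a b X : ℕ} (ha : a ≤ X) (hb : b ≤ X) :
    ((a ! ^ b * b ! : ℕ) : ℚ) =
      ∏ i ∈ range X, ((i + 2 : ℚ) / (i + 1)) ^ tailCount a b (i + 1) := by
  simp only [tailCount, pow_add, pow_mul', prod_mul_distrib, prod_pow]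
  push_cast
  rw [← factorial_eq_prod_pow ha, ← factorial_eq_prod_pow hb]

theorem factorial_pow_mul_factorial_le {a b c d : ℕ} (hd : 0 < d) (hda : d ≤ a) (hdb : d ≤ b)
    (h : c * d = a * b) : a ! ^ b * b ! ≤ c ! ^ d * d ! := by
  have hac : a ≤ c := Nat.le_of_mul_le_mul_right (by rw [h]; gcongr) hd
  have hbc : b ≤ c := Nat.le_of_mul_le_mul_right (by rw [h, mul_comm a]; gcongr) hd
  rw [← Nat.cast_le (α := ℚ), factorial_pow_mul_factorial_eq_prod hac hbc,
    factorial_pow_mul_factorial_eq_prod le_rfl (hdb.trans hbc)]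
  refine prod_le_prod (fun i _ => by positivity) fun i _ => ?_
  refine pow_le_pow_right₀ ?_ (tailCount_le hd hda hdb h (by omega))
  rw [one_le_div (by positivity)]
  linarith

theorem stmt_5_general (m a b : ℕ) (hm : m = a * b) (ha : 2 ≤ a) (hb : 2 ≤ b) :
    Nat.factorial m / ((Nat.factorial (m / m.minFac)) ^ m.minFac * Nat.factorial m.minFac)
      ≤ Nat.factorial m / ((Nat.factorial a) ^ b * Nat.factorial b) := by
  have hpa : m.minFac ≤ a := Nat.minFac_le_of_dvd ha (hm ▸ dvd_mul_right a b)
  have hpb : m.minFac ≤ b := Nat.minFac_le_of_dvd hb (hm ▸ dvd_mul_left b a)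
  have hcofactor : m / m.minFac * m.minFac = a * b := by rw [Nat.div_mul_cancel m.minFac_dvd, hm]
  exact Nat.div_le_div_left (factorial_pow_mul_factorial_le m.minFac_pos hpa hpb hcofactor)
    (by positivity)

/-- Maróti's Lemma 2.1: if `m = a * b ≥ 8` with `a, b ≥ 2` and `p` is the smallest
prime divisor of `m`, then `m! / (((m/p)!)^p * p!) ≤ m! / ((a!)^b * b!)`. -/
theorem stmt_5 (m a b : ℕ) (hm : m = a * b) (hm8 : 8 ≤ m) (ha : 2 ≤ a) (hb : 2 ≤ b) :
    Nat.factorial m / ((Nat.factorial (m / m.minFac)) ^ m.minFac * Nat.factorial m.minFac)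
      ≤ Nat.factorial m / ((Nat.factorial a) ^ b * Nat.factorial b) :=
  stmt_5_general m a b hm ha hb
end

section
/- For every integer t ≥ 3 and all integers a, b ≥ 2 with a·b = 2^t, one has (2^t)! / (((2^(t−1))!)^2 · 2) ≤ (2^t)! / ((a!)^b · b!); that is, among all factorizations 2^t = ab with a, b > 1, the quantity w(a, b) = (2^t)!/((a!)^b · b!) attains its minimum at a = 2^(t−1), b = 2. -/
/-!
Write `b = 2c`, which is possible because `b` is a power of two. The claim becomes
`(a!)^(2c) (2c)! ≤ 2 ((ac)!)^2`, proved by induction on `c`. Passing from `c` to `c + 1`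
multiplies the left side by `(a!)^2 (2c+1)(2c+2)` and the right side by
`(a!)^2 C(a(c+1), a)^2`, and `C(a(c+1), a) ≥ a(c+1) ≥ 2(c+1)`.
-/

open Nat

theorem Nat.self_le_choose {n k : ℕ} (hk : 0 < k) (hkn : k < n) : n ≤ n.choose k := by
  induction n generalizing k with
  | zero => omega
  | succ m ih =>
    obtain ⟨j, rfl⟩ := Nat.exists_eq_add_one_of_ne_zero hk.ne'
    rw [choose_succ_succ']
    rcases Nat.eq_zero_or_pos j with rfl | hj
    · simp [add_comm]
    · have hm : m ≤ m.choose j := ih hj (by omega)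
      have hpos : 0 < m.choose (j + 1) := Nat.choose_pos (by omega)
      omega

theorem Nat.factorial_pow_two_mul_mul_factorial_le {a : ℕ} (ha : 2 ≤ a) {c : ℕ} (hc : 1 ≤ c) :
    a ! ^ (2 * c) * (2 * c)! ≤ 2 * (a * c)! ^ 2 := by
  induction c, hc using Nat.le_induction with
  | base => simp [factorial_succ, mul_comm]
  | succ c hc ih =>
    set C := (a * c + a).choose a
    have hC : 2 * (c + 1) ≤ C :=
      calc 2 * (c + 1) ≤ a * c + a := by nlinarith
        _ ≤ C := Nat.self_le_choose (by omega) (by nlinarith)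
    have hsplit : (a * (c + 1))! = C * a ! * (a * c)! := by
      rw [mul_add_one, ← add_choose_mul_factorial_mul_factorial, mul_right_comm]
    have hstep : (2 * c + 1) * (2 * c + 2) ≤ C ^ 2 := by nlinarith
    calc a ! ^ (2 * (c + 1)) * (2 * (c + 1))!
        = a ! ^ 2 * ((2 * c + 1) * (2 * c + 2)) * (a ! ^ (2 * c) * (2 * c)!) := by
          rw [mul_add_one, factorial_succ, factorial_succ]; ring
      _ ≤ a ! ^ 2 * C ^ 2 * (2 * (a * c)! ^ 2) := by gcongr
      _ = 2 * (a * (c + 1))! ^ 2 := by rw [hsplit]; ring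

theorem stmt_6_general (t a b : ℕ) (ha : 2 ≤ a) (hb : 2 ≤ b) (hab : a * b = 2 ^ t) :
    Nat.factorial (2 ^ t) / ((Nat.factorial (2 ^ (t - 1))) ^ 2 * 2)
      ≤ Nat.factorial (2 ^ t) / ((Nat.factorial a) ^ b * Nat.factorial b) := by
  obtain ⟨k, -, rfl⟩ := (Nat.dvd_prime_pow Nat.prime_two).mp (Dvd.intro_left a hab)
  obtain ⟨c, hc⟩ : 2 ∣ 2 ^ k := dvd_pow_self 2 (by rintro rfl; omega)
  rw [hc] at hab hb ⊢
  have hac : a * c = 2 ^ (t - 1) := by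
    have ht : 0 < t := Nat.pos_of_ne_zero (by rintro rfl; simp at hab)
    have := Nat.two_pow_pred_mul_two ht
    linarith
  have hc1 : 1 ≤ c := by omega
  rw [← hac, mul_comm _ 2]
  exact Nat.div_le_div_left (Nat.factorial_pow_two_mul_mul_factorial_le ha hc1) (by positivity)

/-- For every `t ≥ 3` and all `a, b ≥ 2` with `a * b = 2^t`,
`(2^t)! / (((2^(t-1))!)^2 * 2) ≤ (2^t)! / ((a!)^b * b!)`. -/
theorem stmt_6 (t a b : ℕ) (ht : 3 ≤ t) (ha : 2 ≤ a) (hb : 2 ≤ b) (hab : a * b = 2 ^ t) :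
    Nat.factorial (2 ^ t) / ((Nat.factorial (2 ^ (t - 1))) ^ 2 * 2)
      ≤ Nat.factorial (2 ^ t) / ((Nat.factorial a) ^ b * Nat.factorial b) :=
  stmt_6_general t a b ha hb hab
end

section
/- There exists a natural number N such that for every natural number x ≥ N, there is a prime p with x ≤ p and 5·p ≤ 6·x; that is, for every large enough positive integer x there is a prime in the interval [x, (6/5)·x]. -/
/-!
Chebyshev's method. Since `log N! = ∑_{n ≤ N} Λ(n) ⌊N/n⌋`, the combination
`S(N) = log N! - log ⌊N/2⌋! - log ⌊N/3⌋! - log ⌊N/5⌋! + log ⌊N/30⌋!` equals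
`∑_{n ≤ N} Λ(n) w(⌊N/n⌋)` for the 30-periodic weight `w(m) = m - ⌊m/2⌋ - ⌊m/3⌋ - ⌊m/5⌋ + ⌊m/30⌋`,
which only takes the values 0 and 1 and is 1 for `1 ≤ m ≤ 5` and `7 ≤ m ≤ 9`. Hence
`ψ(N) - ψ(N/6) + ψ(N/7) - ψ(N/10) ≤ S(N) ≤ ψ(N)`, while Stirling's formula gives
`S(N) = A N + O(log N)` with `A = log 2 / 2 + log 3 / 3 + log 5 / 5 - log 30 / 30 ≈ 0.92`.
The right inequality gives `ψ(N) ≥ A N - O(log N)`, the left one, by strong induction,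
`ψ(N) ≤ (90/77) A N + O(√N)`. As `90/77 < 6/5` and `ψ - θ = O(√x)`, this leaves
`θ(6x/5) - θ(x) ≥ (12/385) A x - O(√x) > 0` for large `x`.
-/

open Finset Real Chebyshev
open ArithmeticFunction hiding log
open scoped Nat

theorem log_factorial_eq_sum_vonMangoldt (N : ℕ) :
    log N ! = ∑ n ∈ Ioc 0 N, Λ n * (N / n : ℕ) := by
  rw [← sum_Ioc_mul_zeta_eq_sum, vonMangoldt_mul_zeta, ← prod_Ico_id_eq_factorial,
    show Ico 1 (N + 1) = Ioc 0 N from Ico_add_one_add_one_eq_Ioc 0 N, Nat.cast_prod,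
    Real.log_prod fun n hn => Nat.cast_ne_zero.mpr (mem_Ioc.mp hn).1.ne']
  simp [ArithmeticFunction.log_apply]

theorem log_factorial_div_eq_sum (N d : ℕ) :
    log (N / d)! = ∑ n ∈ Ioc 0 N, Λ n * (N / n / d : ℕ) := by
  rw [log_factorial_eq_sum_vonMangoldt, sum_subset (Ioc_subset_Ioc_right (Nat.div_le_self N d))]
  · refine sum_congr rfl fun n _ => ?_
    rw [Nat.div_div_eq_div_mul, Nat.div_div_eq_div_mul, mul_comm d]
  · intro n hN hn
    simp only [mem_Ioc, not_and, not_le] at hN hn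
    simp [Nat.div_eq_of_lt (hn hN.1)]

theorem psi_natCast_div_eq_sum (N d : ℕ) (hd : 0 < d) :
    ψ (N / d : ℕ) = ∑ n ∈ Ioc 0 N, Λ n * if d ≤ N / n then 1 else 0 := by
  simp only [mul_ite, mul_one, mul_zero]
  rw [psi, Nat.floor_natCast, ← sum_filter]
  congr 1
  ext n
  simp only [mem_Ioc, mem_filter, and_assoc, and_congr_right_iff]
  intro hn
  rw [Nat.le_div_iff_mul_le hd, Nat.le_div_iff_mul_le hn, mul_comm]
  exact ⟨fun h => ⟨le_trans (Nat.le_mul_of_pos_left n hd) h, h⟩, fun h => h.2⟩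

def chebyshevWeight (m : ℕ) : ℤ := m - ↑(m / 2) - ↑(m / 3) - ↑(m / 5) + ↑(m / 30)

theorem chebyshevWeight_le_one (m : ℕ) : chebyshevWeight m ≤ 1 := by
  unfold chebyshevWeight; omega

theorem le_chebyshevWeight {m : ℕ} (hm : 1 ≤ m) :
    1 - (if 6 ≤ m then 1 else 0) + (if 7 ≤ m then 1 else 0) - (if 10 ≤ m then 1 else 0)
      ≤ chebyshevWeight m := by
  unfold chebyshevWeight; split_ifs <;> omega

noncomputable def chebyshevSum (N : ℕ) : ℝ :=
  log N ! - log (N / 2)! - log (N / 3)! - log (N / 5)! + log (N / 30)!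

theorem chebyshevSum_eq_sum (N : ℕ) :
    chebyshevSum N = ∑ n ∈ Ioc 0 N, Λ n * chebyshevWeight (N / n) := by
  rw [chebyshevSum, log_factorial_div_eq_sum N 2, log_factorial_div_eq_sum N 3,
    log_factorial_div_eq_sum N 5, log_factorial_div_eq_sum N 30, log_factorial_eq_sum_vonMangoldt,
    ← sum_sub_distrib, ← sum_sub_distrib, ← sum_sub_distrib, ← sum_add_distrib]
  refine sum_congr rfl fun n _ => ?_
  simp only [chebyshevWeight, Int.cast_add, Int.cast_sub, Int.cast_natCast]
  ring

theorem chebyshevSum_le_psi (N : ℕ) : chebyshevSum N ≤ ψ N := by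
  rw [chebyshevSum_eq_sum, psi, Nat.floor_natCast]
  refine sum_le_sum fun n _ => ?_
  simpa using mul_le_mul_of_nonneg_left (Int.cast_le.mpr (chebyshevWeight_le_one (N / n)))
    (vonMangoldt_nonneg (n := n))

theorem psi_sub_psi_add_psi_sub_psi_le_chebyshevSum (N : ℕ) :
    ψ N - ψ ↑(N / 6) + ψ ↑(N / 7) - ψ ↑(N / 10) ≤ chebyshevSum N := by
  rw [psi_natCast_div_eq_sum N 6 (by norm_num), psi_natCast_div_eq_sum N 7 (by norm_num),
    psi_natCast_div_eq_sum N 10 (by norm_num), psi, Nat.floor_natCast, chebyshevSum_eq_sum,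
    ← sum_sub_distrib, ← sum_add_distrib, ← sum_sub_distrib]
  refine sum_le_sum fun n hn => ?_
  have hm : 1 ≤ N / n := (Nat.one_le_div_iff (mem_Ioc.mp hn).1).mpr (mem_Ioc.mp hn).2
  have := mul_le_mul_of_nonneg_left (Int.cast_le (R := ℝ).mpr (le_chebyshevWeight hm))
    (vonMangoldt_nonneg (n := n))
  push_cast at this
  linarith

theorem log_factorial_le (n : ℕ) : log n ! ≤ n * log n - n + log n / 2 + 1 := by
  rcases n with _ | k
  · simp
  set n := k + 1
  have hn : (0 : ℝ) < n := by positivity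
  have hseq : Stirling.stirlingSeq n ≤ Stirling.stirlingSeq 1 :=
    Stirling.stirlingSeq'_antitone (Nat.zero_le k)
  have hlog := log_le_log (Stirling.stirlingSeq'_pos k) hseq
  rw [Stirling.log_stirlingSeq_formula, Stirling.stirlingSeq_one, log_div (exp_pos 1).ne'
    (by positivity), log_exp, log_sqrt zero_le_two, log_mul two_ne_zero hn.ne',
    log_div hn.ne' (exp_pos 1).ne', log_exp] at hlog
  linarith

theorem le_log_factorial (n : ℕ) : n * log n - n ≤ log n ! := by
  rcases eq_or_ne n 0 with rfl | hn
  · simp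
  have := Stirling.le_log_factorial_stirling hn
  have : 0 ≤ log n := log_natCast_nonneg n
  have : 0 < log (2 * π) := log_pos (by linarith [pi_gt_three])
  linarith

theorem mul_log_sub_mul_log_le {m y : ℝ} (hm : 0 < m) (hmy : m ≤ y) :
    (y * log y - y) - (m * log m - m) ≤ (y - m) * log y := by
  have hy := hm.trans_le hmy
  have h := log_le_sub_one_of_pos (div_pos hy hm)
  rw [log_div hy.ne' hm.ne', le_sub_iff_add_le, le_div_iff₀ hm] at h
  linarith

theorem le_mul_log_sub_mul_log {m y : ℝ} (hm : 0 < m) (hmy : m ≤ y) :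
    (y - m) * log m ≤ (y * log y - y) - (m * log m - m) := by
  have hy := hm.trans_le hmy
  have h := one_sub_inv_le_log_of_pos (div_pos hy hm)
  rw [log_div hy.ne' hm.ne', inv_div, sub_le_comm, le_div_iff₀ hy] at h
  linarith

theorem abs_log_factorial_floor_sub_le {y : ℝ} (hy : 1 ≤ y) :
    |log (⌊y⌋₊)! - (y * log y - y)| ≤ log y + 1 := by
  set m := ⌊y⌋₊
  have hm : (1 : ℝ) ≤ m := by exact_mod_cast Nat.one_le_floor_iff y |>.mpr hy
  have hmy : (m : ℝ) ≤ y := Nat.floor_le (by linarith)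
  have hym : y - m ≤ 1 := by linarith [Nat.lt_floor_add_one y]
  have hlogm : 0 ≤ log m := log_nonneg hm
  have hlogy : log m ≤ log y := log_le_log (by linarith) hmy
  have h1 := mul_log_sub_mul_log_le (by linarith) hmy
  have h2 := le_mul_log_sub_mul_log (by linarith) hmy
  have h3 := log_factorial_le m
  have h4 := le_log_factorial m
  rw [abs_le]
  constructor <;> nlinarith

noncomputable def chebyshevConst : ℝ := log 2 / 2 + log 3 / 3 + log 5 / 5 - log 30 / 30

theorem chebyshevConst_pos : 0 < chebyshevConst := by
  have h30 : log 30 = log 2 + log 3 + log 5 := by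
    rw [← log_mul two_ne_zero three_ne_zero, ← log_mul (by norm_num) (by norm_num)]; norm_num
  have := log_pos (one_lt_two : (1 : ℝ) < 2)
  have := log_pos (by norm_num : (1 : ℝ) < 3)
  have := log_pos (by norm_num : (1 : ℝ) < 5)
  rw [chebyshevConst, h30]
  linarith

theorem chebyshevConst_le_two : chebyshevConst ≤ 2 := by
  have := log_le_sub_one_of_pos (two_pos : (0 : ℝ) < 2)
  have := log_le_sub_one_of_pos (three_pos : (0 : ℝ) < 3)
  have := log_le_sub_one_of_pos (by norm_num : (0 : ℝ) < 5)
  have := log_pos (by norm_num : (1 : ℝ) < 30)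
  rw [chebyshevConst]
  linarith

theorem chebyshevConst_mul_eq {x : ℝ} (hx : 0 < x) :
    chebyshevConst * x = (x * log x - x) - (x / 2 * log (x / 2) - x / 2)
      - (x / 3 * log (x / 3) - x / 3) - (x / 5 * log (x / 5) - x / 5)
      + (x / 30 * log (x / 30) - x / 30) := by
  rw [log_div hx.ne' two_ne_zero, log_div hx.ne' three_ne_zero, log_div hx.ne' (by norm_num),
    log_div hx.ne' (by norm_num), chebyshevConst]
  ring

theorem abs_chebyshevSum_sub_le {N : ℕ} (hN : 30 ≤ N) :
    |chebyshevSum N - chebyshevConst * N| ≤ 5 * (log N + 1) := by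
  have hN0 : (0 : ℝ) < N := by positivity
  have key (d : ℕ) (hd : 0 < d) (hdN : d ≤ N) :
      |log (N / d)! - ((N / d : ℝ) * log (N / d) - N / d)| ≤ log N + 1 := by
    have hy : 1 ≤ (N / d : ℝ) := (one_le_div (by positivity)).mpr (by exact_mod_cast hdN)
    have hlog : log (N / d : ℝ) ≤ log N :=
      log_le_log (by linarith) (div_le_self hN0.le (by exact_mod_cast hd))
    rw [← Nat.floor_div_eq_div (K := ℝ)]
    linarith [abs_log_factorial_floor_sub_le hy]
  have h1 := key 1 one_pos (by omega)
  have h2 := key 2 two_pos (by omega)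
  have h3 := key 3 three_pos (by omega)
  have h5 := key 5 (by norm_num) (by omega)
  have h30 := key 30 (by norm_num) (by omega)
  simp only [Nat.div_one, Nat.cast_one, div_one, Nat.cast_ofNat, abs_le] at h1 h2 h3 h5 h30 ⊢
  rw [chebyshevSum, chebyshevConst_mul_eq hN0]
  constructor <;> linarith

theorem chebyshevConst_mul_sub_le_psi {N : ℕ} (hN : 30 ≤ N) :
    chebyshevConst * N - 5 * (log N + 1) ≤ ψ N := by
  linarith [chebyshevSum_le_psi N, (abs_le.mp (abs_chebyshevSum_sub_le hN)).1]

theorem log_le_two_mul_sqrt {x : ℝ} (hx : 0 ≤ x) : log x ≤ 2 * √x := by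
  linarith [log_le_self (sqrt_nonneg x), log_sqrt hx]

theorem sqrt_le_mul_sqrt {a b c : ℝ} (hc : 0 ≤ c) (h : a ≤ c ^ 2 * b) : √a ≤ c * √b := by
  rw [← sqrt_sq hc, ← sqrt_mul (sq_nonneg c)]
  exact sqrt_le_sqrt h

theorem natCast_div_sub_one_le (m n : ℕ) : (m / n : ℝ) - 1 ≤ ((m / n : ℕ) : ℝ) := by
  rw [← Nat.floor_div_eq_div (K := ℝ)]
  exact (Nat.sub_one_lt_floor _).le

-- `90/77 * (1 - 1/6 - 1/10) = 1 - 1/7`: the linear terms cancel in the induction step.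
theorem psi_le_chebyshevConst_mul_add_sqrt (N : ℕ) :
    ψ N ≤ 90 / 77 * chebyshevConst * N + 128 * √N := by
  induction N using Nat.strong_induction_on with
  | _ N ih =>
  have hA := chebyshevConst_pos
  have hA2 := chebyshevConst_le_two
  rcases lt_or_ge N 210 with hN | hN
  · have hsqrt : √N ≤ 15 := by
      rw [show (15 : ℝ) = √(15 ^ 2) from (sqrt_sq (by norm_num)).symm]
      exact sqrt_le_sqrt (by exact_mod_cast (by omega : N ≤ 15 ^ 2))
    have hlog4 : log 4 ≤ 3 := by linarith [log_le_sub_one_of_pos (by norm_num : (0 : ℝ) < 4)]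
    have hN' : (N : ℝ) ≤ 15 * √N := calc
      (N : ℝ) = √N * √N := (mul_self_sqrt N.cast_nonneg).symm
      _ ≤ 15 * √N := by gcongr
    have := psi_le_const_mul_self (Nat.cast_nonneg (α := ℝ) N)
    have : (log 4 + 4) * N ≤ 7 * N := by gcongr; linarith
    have : 0 ≤ 90 / 77 * chebyshevConst * N := by positivity
    linarith
  have hsqrt : 1 ≤ √N := one_le_sqrt.mpr (by exact_mod_cast (by omega : 1 ≤ N))
  have hlog : log N ≤ 2 * √N := log_le_two_mul_sqrt N.cast_nonneg
  have hS := (abs_le.mp (abs_chebyshevSum_sub_le (by omega : 30 ≤ N))).2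
  have h7 := chebyshevConst_mul_sub_le_psi (by omega : 30 ≤ N / 7)
  have h6 := ih (N / 6) (by omega)
  have h10 := ih (N / 10) (by omega)
  have hcomb := psi_sub_psi_add_psi_sub_psi_le_chebyshevSum N
  have c6 : ((N / 6 : ℕ) : ℝ) ≤ N / 6 := by exact_mod_cast Nat.cast_div_le
  have c10 : ((N / 10 : ℕ) : ℝ) ≤ N / 10 := by exact_mod_cast Nat.cast_div_le
  have c7 : (N / 7 : ℝ) - 1 ≤ ((N / 7 : ℕ) : ℝ) := by exact_mod_cast natCast_div_sub_one_le N 7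
  have s6 : √((N / 6 : ℕ) : ℝ) ≤ 5 / 12 * √N := sqrt_le_mul_sqrt (by norm_num) (by linarith)
  have s10 : √((N / 10 : ℕ) : ℝ) ≤ 1 / 3 * √N := sqrt_le_mul_sqrt (by norm_num) (by linarith)
  have hlog7 : log ((N / 7 : ℕ) : ℝ) ≤ log N :=
    log_le_log (by exact_mod_cast (by omega : 0 < N / 7)) (by exact_mod_cast Nat.div_le_self N 7)
  have := mul_le_mul_of_nonneg_left c6 (by positivity : (0 : ℝ) ≤ 90 / 77 * chebyshevConst)
  have := mul_le_mul_of_nonneg_left c10 (by positivity : (0 : ℝ) ≤ 90 / 77 * chebyshevConst)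
  have := mul_le_mul_of_nonneg_left c7 hA.le
  linarith

theorem exists_prime_of_theta_lt {a b : ℕ} (h : θ a < θ b) : ∃ p, p.Prime ∧ a < p ∧ p ≤ b := by
  by_contra! H
  refine h.not_ge ?_
  rw [theta, theta, Nat.floor_natCast, Nat.floor_natCast]
  refine sum_le_sum_of_subset_of_nonneg (fun p hp => ?_) fun p _ _ => log_natCast_nonneg p
  simp only [mem_filter, mem_Ioc] at hp ⊢
  exact ⟨⟨hp.1.1, le_of_not_gt fun hap => (H p hp.2 hap).not_ge hp.1.2⟩, hp.2⟩

theorem exists_mul_sub_sqrt_le_theta_sub_theta : ∃ K : ℝ, ∀ x : ℕ, 30 ≤ x →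
    12 / 385 * chebyshevConst * x - K * √x ≤ θ ↑(6 * x / 5) - θ x := by
  obtain ⟨C, hC⟩ := psi_sub_theta_le_mul_sqrt
  refine ⟨155 + 2 * |C|, fun x hx => ?_⟩
  set M := 6 * x / 5
  have hA := chebyshevConst_pos
  have hA2 := chebyshevConst_le_two
  have hsqrt : 1 ≤ √x := one_le_sqrt.mpr (by exact_mod_cast (by omega : 1 ≤ x))
  have cM : (6 * x / 5 : ℝ) - 1 ≤ M := by exact_mod_cast natCast_div_sub_one_le (6 * x) 5
  have sM : √M ≤ 2 * √x := sqrt_le_mul_sqrt (by norm_num) (by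
    have : (M : ℝ) ≤ 6 * x / 5 := by exact_mod_cast Nat.cast_div_le
    linarith)
  have hlogM : log M ≤ 2 * √M := log_le_two_mul_sqrt M.cast_nonneg
  have hM := chebyshevConst_mul_sub_le_psi (by omega : 30 ≤ M)
  have hx := (theta_le_psi x).trans (psi_le_chebyshevConst_mul_add_sqrt x)
  have hCM : C * √M ≤ |C| * (2 * √x) :=
    (mul_le_mul_of_nonneg_right (le_abs_self C) (sqrt_nonneg _)).trans
      (mul_le_mul_of_nonneg_left sM (abs_nonneg C))
  have := hC M
  have := mul_le_mul_of_nonneg_left cM hA.le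
  have := mul_le_mul_of_nonneg_left hsqrt (abs_nonneg C)
  linarith

theorem eventually_theta_lt_theta_six_mul_div_five :
    ∀ᶠ x : ℕ in Filter.atTop, θ x < θ ↑(6 * x / 5) := by
  obtain ⟨K, hK⟩ := exists_mul_sub_sqrt_le_theta_sub_theta
  set c := 12 / 385 * chebyshevConst
  have hc : 0 < c := by have := chebyshevConst_pos; positivity
  have hsqrt := (tendsto_sqrt_atTop.comp tendsto_natCast_atTop_atTop).eventually_gt_atTop (K / c)
  filter_upwards [Filter.eventually_ge_atTop 30, hsqrt] with x hx hKx
  have hKx' : K < c * √x := by rwa [div_lt_iff₀' hc] at hKx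
  have : K * √x < c * x := calc
    K * √x < c * √x * √x := mul_lt_mul_of_pos_right hKx' (sqrt_pos.mpr (by positivity))
    _ = c * x := by rw [mul_assoc, mul_self_sqrt x.cast_nonneg]
  linarith [hK x hx]

/-- Nagura's theorem (weak form): there exists `N` such that for every `x ≥ N`
there is a prime `p` with `x ≤ p` and `5 * p ≤ 6 * x`. -/
theorem stmt_8 : ∃ N : ℕ, ∀ x : ℕ, N ≤ x → ∃ p : ℕ, p.Prime ∧ x ≤ p ∧ 5 * p ≤ 6 * x := by
  obtain ⟨N, hN⟩ := Filter.eventually_atTop.mp eventually_theta_lt_theta_six_mul_div_five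
  refine ⟨N, fun x hx => ?_⟩
  obtain ⟨p, hp, hxp, hpx⟩ := exists_prime_of_theta_lt (hN x hx)
  exact ⟨p, hp, hxp.le, by omega⟩
end
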